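/- The dagger of the arrangement channel is deterministic accumulation: for any distribution ω on X and K ≥ 1, arr†_{Multinomial[K](ω)}(x⃗) is the point distribution on acc(x⃗), i.e. arr†_{Multinomial[K](ω)}(x⃗)(φ) = 1 if φ = acc(x⃗) and 0 otherwise, whenever ω^{⊗K}(x⃗) ≠ 0. -/
import Mathlib

open Finset

noncomputable def validity {X : Type*} [Fintype X] (ω p : X → ℝ) : ℝ := ∑ x, ω x * p x
noncomputable def updateD {X : Type*} [Fintype X] (ω p : X → ℝ) : X → ℝ :=
  fun x => ω x * p x / validity ω p
noncomputable def push {X Y : Type*} [Fintype X] (c : X → Y → ℝ) (ω : X → ℝ) : Y → ℝ :=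
  fun y => ∑ x, ω x * c x y
noncomputable def pull {X Y : Type*} [Fintype Y] (c : X → Y → ℝ) (q : Y → ℝ) : X → ℝ :=
  fun x => ∑ y, c x y * q y
noncomputable def dagger {X Y : Type*} [Fintype X] (c : X → Y → ℝ) (ω : X → ℝ) : Y → X → ℝ :=
  fun y x => ω x * c x y / push c ω y

def IsDist {X : Type*} [Fintype X] (ω : X → ℝ) : Prop :=
  (∀ x, 0 ≤ ω x) ∧ ∑ x, ω x = 1
def IsChannel {X Y : Type*} [Fintype Y] (c : X → Y → ℝ) : Prop :=
  ∀ x, IsDist (c x)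
def IsPred {X : Type*} (p : X → ℝ) : Prop := ∀ x, 0 ≤ p x ∧ p x ≤ 1

noncomputable def coefm {X : Type*} [Fintype X] [DecidableEq X] (K : ℕ) (φ : Sym X K) : ℝ :=
  (K.factorial : ℝ) / ∏ x, (((φ : Multiset X).count x).factorial : ℝ)
noncomputable def multinom {X : Type*} [Fintype X] [DecidableEq X] (K : ℕ) (ω : X → ℝ)
    (φ : Sym X K) : ℝ :=
  coefm K φ * ∏ x, ω x ^ ((φ : Multiset X).count x)
noncomputable def flrn {X : Type*} [DecidableEq X] (K : ℕ) (φ : Sym X K) : X → ℝ :=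
  fun x => ((φ : Multiset X).count x : ℝ) / K
def acc {X : Type*} {K : ℕ} (v : Fin K → X) : Sym X K :=
  ⟨Multiset.map v Finset.univ.val, by simp⟩
noncomputable def arr {X : Type*} [Fintype X] [DecidableEq X] {K : ℕ} (φ : Sym X K) :
    (Fin K → X) → ℝ :=
  fun v => if acc v = φ then 1 / coefm K φ else 0
noncomputable def Mchan {X Y : Type*} [Fintype X] [DecidableEq X] [Fintype Y] [DecidableEq Y]
    {K : ℕ} (c : X → Y → ℝ) : Sym X K → Sym Y K → ℝ :=
  fun φ ψ => ∑ v : Fin K → X, arr φ v *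
    ∑ w : Fin K → Y, (∏ i, c (v i) (w i)) * (if acc w = ψ then 1 else 0)
open Classical in
noncomputable def klE {Z : Type*} [Fintype Z] (ω ρ : Z → ℝ) : EReal :=
  if ∀ z, ω z ≠ 0 → ρ z ≠ 0 then ((∑ z, ω z * Real.log (ω z / ρ z) : ℝ) : EReal) else ⊤

lemma coefm_pos {X : Type*} [Fintype X] [DecidableEq X] (K : ℕ) (φ : Sym X K) :
    0 < coefm K φ := by
  unfold coefm
  apply div_pos
  · exact_mod_cast Nat.factorial_pos K
  · exact Finset.prod_pos fun x _ => by exact_mod_cast Nat.factorial_pos _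

lemma prod_count {X : Type*} [Fintype X] [DecidableEq X] {K : ℕ} (ω : X → ℝ)
    (v : Fin K → X) :
    ∏ x, ω x ^ ((acc v : Multiset X).count x) = ∏ i, ω (v i) := by
  classical
  have h : ∏ i, ω (v i) = (Multiset.map ω (Multiset.map v Finset.univ.val)).prod := by
    simp only [Multiset.map_map, Finset.prod]
    rfl
  rw [h]
  set m : Multiset X := Multiset.map v Finset.univ.val with hm
  rw [Finset.prod_multiset_map_count]
  rw [show (acc v : Multiset X) = m from rfl]
  symm
  apply Finset.prod_subset (Finset.subset_univ _)
  intro x _ hx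
  simp [Multiset.count_eq_zero_of_notMem (by simpa using hx)]

theorem stmt13 {X : Type*} [Fintype X] [DecidableEq X] (K : ℕ) (hK : 1 ≤ K)
    (ω : X → ℝ) (hω : IsDist ω) (v : Fin K → X) (hv : (∏ i, ω (v i)) ≠ 0) :
    ∀ φ : Sym X K,
      dagger (fun φ : Sym X K => arr φ) (multinom K ω) v φ
        = if φ = acc v then 1 else 0 := by
  intro φ
  have hcoef := coefm_pos K (acc v)
  have hpush : push (fun φ : Sym X K => arr φ) (multinom K ω) v = ∏ i, ω (v i) := by
    unfold push
    rw [Finset.sum_eq_single (acc v)]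
    · unfold arr multinom
      dsimp only
      rw [if_pos rfl]
      rw [← prod_count ω v]
      field_simp
    · intro b _ hb
      unfold arr
      dsimp only
      rw [if_neg (fun h => hb h.symm), mul_zero]
    · intro h; exact absurd (Finset.mem_univ _) h
  unfold dagger
  rw [hpush]
  by_cases hφ : φ = acc v
  · subst hφ
    rw [if_pos rfl]
    unfold arr multinom
    dsimp only
    rw [if_pos rfl]
    rw [← prod_count ω v] at hv ⊢
    field_simp
  · rw [if_neg hφ]
    unfold arr
    dsimp only
    rw [if_neg (fun h => hφ h.symm)]
    simp
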